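/- Let t ∈ ℝ, A ∈ M_N(ℂ), and let W̃ be a matrix weight on ℝ with monic MVOPs P̃(·,n) and squared norms ℋ̃(n), satisfying the adjointness relation for v(x) = x² + tx: ∫_ℝ (R'(y)+R(y)A) W̃(y) S(y)* dy = ∫_ℝ R(y) W̃(y) (−S'(y) − S(y)A + (2y+t)S(y))* dy for all matrix polynomials R, S. Then the squared norms satisfy, for all n ≥ 1, ℋ̃(n+1) = ½ℋ̃(n) + ℋ̃(n)ℋ̃(n−1)⁻¹ℋ̃(n) − ¼ℋ̃(n)A*ℋ̃(n)⁻¹Aℋ̃(n) + ¼Aℋ̃(n)A*, with initial condition ℋ̃(1) = ½ℋ̃(0) − ¼ℋ̃(0)A*ℋ̃(0)⁻¹Aℋ̃(0) + ¼Aℋ̃(0)A*. -/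

import Mathlib

open MeasureTheory Matrix Finset
open scoped ComplexOrder

/-- Entrywise integral of a matrix-valued function on `ℝ`. -/
noncomputable def matInt (N : ℕ) (F : ℝ → Matrix (Fin N) (Fin N) ℂ) :
    Matrix (Fin N) (Fin N) ℂ :=
  Matrix.of fun i j => ∫ y : ℝ, F y i j

/-- Entrywise derivative of a matrix-valued function on `ℝ`. -/
noncomputable def matDeriv (N : ℕ) (F : ℝ → Matrix (Fin N) (Fin N) ℂ) (x : ℝ) :
    Matrix (Fin N) (Fin N) ℂ :=
  Matrix.of fun i j => deriv (fun y => F y i j) x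

/-- `F` is (the evaluation of) a matrix polynomial. -/
def IsMatPoly (N : ℕ) (F : ℝ → Matrix (Fin N) (Fin N) ℂ) : Prop :=
  ∃ (d : ℕ) (c : ℕ → Matrix (Fin N) (Fin N) ℂ),
    ∀ x : ℝ, F x = ∑ k ∈ Finset.range (d + 1), ((x : ℂ) ^ k) • c k

/-- `F` is a matrix polynomial of degree `n` with leading coefficient the identity. -/
def IsMonicMatPoly (N n : ℕ) (F : ℝ → Matrix (Fin N) (Fin N) ℂ) : Prop :=
  ∃ c : ℕ → Matrix (Fin N) (Fin N) ℂ, c n = 1 ∧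
    ∀ x : ℝ, F x = ∑ k ∈ Finset.range (n + 1), ((x : ℂ) ^ k) • c k

/-- The matrix-valued inner product `⟨H, G⟩ = ∫ H(y) W(y) G(y)* dy`. -/
noncomputable def matIP (N : ℕ) (W H G : ℝ → Matrix (Fin N) (Fin N) ℂ) :
    Matrix (Fin N) (Fin N) ℂ :=
  matInt N fun y => H y * W y * (G y)ᴴ

/-!
Everything is transported to matrix polynomials `p n` with `P n = p n (x • 1)`. The basic tool is
that `⟨R, P d⟩ = R_d ℋ(d)` whenever `deg R ≤ d`, `R_d` being the coefficient of `x ^ d`, since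
`P d` is orthogonal to all polynomials of lower degree. Let `X n` be the coefficient of `x ^ (n - 1)`
in `P n` (and `X 0 = 0`). Adjointness gives two structure relations:
* `𝒟 P(n+1) - A P(n+1)` has degree `n` and top coefficient `n + 1 + X(n+1) A - A X(n+1)`, and its
  pairing with `P n` is `⟨P(n+1), 𝒟† P n⟩ = 2 ℋ(n+1)`;
* `𝒟† P n - 2 P(n+1)` has degree `n` and top coefficient `2 X n + t - A - 2 X(n+1)`, and its
  pairing with `P n` is `⟨𝒟 P n, P n⟩* = ℋ(n) A*`.
The second relation expresses `X(n+1)` through `X n`; substituting it into the first for `n + 1`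
and using the first for `n` eliminates the `X`'s and leaves the recursion.
-/

section MatrixPolynomials

open Polynomial

variable {N : ℕ}

noncomputable def evalScalar (x : ℝ) :
    (Matrix (Fin N) (Fin N) ℂ)[X] →ₐ[ℂ] Matrix (Fin N) (Fin N) ℂ :=
  eval₂AlgHom (AlgHom.id ℂ _) (scalar (Fin N) (x : ℂ)) fun _ =>
    (scalar_commute _ (Commute.all _) _).symm

@[simp] theorem evalScalar_C (x : ℝ) (a : Matrix (Fin N) (Fin N) ℂ) : evalScalar x (C a) = a := by
  simp [evalScalar]

@[simp] theorem evalScalar_X (x : ℝ) :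
    evalScalar x (X : (Matrix (Fin N) (Fin N) ℂ)[X]) = (x : ℂ) • 1 := by
  simp [evalScalar, ← smul_one_eq_diagonal]

@[simp] theorem evalScalar_monomial (x : ℝ) (k : ℕ) (a : Matrix (Fin N) (Fin N) ℂ) :
    evalScalar x (monomial k a) = (x : ℂ) ^ k • a := by
  simp only [evalScalar, eval₂AlgHom_apply, eval₂_monomial, ← map_pow]
  rw [scalar_apply, ← smul_one_eq_diagonal, Matrix.mul_smul, mul_one]
  rfl

theorem evalScalar_apply (x : ℝ) (p : (Matrix (Fin N) (Fin N) ℂ)[X]) (i j : Fin N) :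
    evalScalar x p i j = (matPolyEquiv.symm p i j).eval (x : ℂ) := by
  rw [← Matrix.map_apply (f := eval (x : ℂ)), matPolyEquiv_symm_map_eval]
  rfl

theorem evalScalar_eq_sum_range (x : ℝ) (p : (Matrix (Fin N) (Fin N) ℂ)[X]) :
    evalScalar x p = ∑ k ∈ Finset.range (p.natDegree + 1), (x : ℂ) ^ k • p.coeff k := by
  conv_lhs => rw [p.as_sum_range]
  simp

theorem isMatPoly_evalScalar (p : (Matrix (Fin N) (Fin N) ℂ)[X]) :
    IsMatPoly N fun x => evalScalar x p :=
  ⟨p.natDegree, p.coeff, fun x => evalScalar_eq_sum_range x p⟩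

theorem IsMonicMatPoly.exists_eq_evalScalar {n : ℕ} {F : ℝ → Matrix (Fin N) (Fin N) ℂ}
    (hF : IsMonicMatPoly N n F) :
    ∃ p : (Matrix (Fin N) (Fin N) ℂ)[X], p.degree ≤ n ∧ p.coeff n = 1 ∧
      F = fun x => evalScalar x p := by
  obtain ⟨c, hcn, hF⟩ := hF
  refine ⟨∑ k ∈ Finset.range (n + 1), monomial k (c k), ?_, by simp [coeff_monomial, hcn],
    funext fun x => by simp [hF]⟩
  exact (degree_sum_le _ _).trans <| Finset.sup_le fun k hk =>
    (degree_monomial_le _ _).trans (by exact_mod_cast Finset.mem_range_succ_iff.mp hk)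

theorem derivative_matPolyEquiv_symm (p : (Matrix (Fin N) (Fin N) ℂ)[X]) (i j : Fin N) :
    derivative (matPolyEquiv.symm p i j) = matPolyEquiv.symm (derivative p) i j := by
  ext k
  simp only [coeff_derivative, matPolyEquiv_symm_apply_coeff]
  rw [← Nat.cast_succ, ← Nat.cast_succ, ← nsmul_eq_mul', ← nsmul_eq_mul', Matrix.smul_apply]

theorem matDeriv_evalScalar (p : (Matrix (Fin N) (Fin N) ℂ)[X]) (y : ℝ) :
    matDeriv N (fun x => evalScalar x p) y = evalScalar y (derivative p) := by
  ext i j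
  simp only [matDeriv, of_apply, evalScalar_apply, ← derivative_matPolyEquiv_symm]
  exact ((matPolyEquiv.symm p i j).hasDerivAt (y : ℂ)).comp_ofReal.deriv

theorem matInt_sub {F G : ℝ → Matrix (Fin N) (Fin N) ℂ}
    (hF : ∀ i j, Integrable fun y => F y i j) (hG : ∀ i j, Integrable fun y => G y i j) :
    matInt N (fun y => F y - G y) = matInt N F - matInt N G := by
  ext i j
  exact integral_sub (hF i j) (hG i j)

theorem matInt_mul_left (B : Matrix (Fin N) (Fin N) ℂ) {F : ℝ → Matrix (Fin N) (Fin N) ℂ}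
    (hF : ∀ i j, Integrable fun y => F y i j) :
    matInt N (fun y => B * F y) = B * matInt N F := by
  ext i j
  simp only [matInt, of_apply, Matrix.mul_apply]
  rw [integral_finsetSum _ fun k _ => (hF k j).const_mul _]
  simp_rw [integral_const_mul]

theorem conjTranspose_matInt (F : ℝ → Matrix (Fin N) (Fin N) ℂ) :
    (matInt N F)ᴴ = matInt N fun y => (F y)ᴴ := by
  ext i j
  simp [matInt, integral_conj]

def HasFiniteMoments (W : ℝ → Matrix (Fin N) (Fin N) ℂ) : Prop :=
  ∀ (m : ℕ) (i j : Fin N), Integrable fun x : ℝ => (x : ℂ) ^ m * W x i j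

noncomputable def polyIP (W : ℝ → Matrix (Fin N) (Fin N) ℂ)
    (p q : (Matrix (Fin N) (Fin N) ℂ)[X]) : Matrix (Fin N) (Fin N) ℂ :=
  matIP N W (fun x => evalScalar x p) (fun x => evalScalar x q)

section InnerProduct

variable {W : ℝ → Matrix (Fin N) (Fin N) ℂ}

theorem hasFiniteMoments_of_integrable_abs_pow_mul_norm
    (hWmeas : ∀ i j : Fin N, Measurable fun x => W x i j)
    (hWmom : ∀ (m : ℕ) (i j : Fin N), Integrable fun x : ℝ => |x| ^ m * ‖W x i j‖) :
    HasFiniteMoments W := fun m i j =>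
  (hWmom m i j).mono ((Complex.measurable_ofReal.pow_const m).mul
    (hWmeas i j)).aestronglyMeasurable (.of_forall fun x => by simp)

theorem HasFiniteMoments.integrable_eval_mul (hW : HasFiniteMoments W) (f : ℂ[X])
    (i j : Fin N) : Integrable fun x : ℝ => f.eval (x : ℂ) * W x i j := by
  simp_rw [eval_eq_sum_range, Finset.sum_mul, mul_assoc]
  exact integrable_finsetSum _ fun k _ => (hW k i j).const_mul _

theorem HasFiniteMoments.integrable_evalScalar_mul_mul (hW : HasFiniteMoments W)
    (p q : (Matrix (Fin N) (Fin N) ℂ)[X]) (i j : Fin N) :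
    Integrable fun x => (evalScalar x p * W x * (evalScalar x q)ᴴ) i j := by
  have hconj (f : ℂ[X]) (x : ℝ) :
      star (f.eval (x : ℂ)) = (f.map (starRingEnd ℂ)).eval (x : ℂ) := by
    rw [eval_map, ← Complex.conj_ofReal, eval₂_hom, Complex.conj_ofReal]
    rfl
  simp only [Matrix.mul_apply, conjTranspose_apply, evalScalar_apply, Finset.sum_mul, hconj]
  refine integrable_finsetSum _ fun b _ => integrable_finsetSum _ fun a _ => ?_
  simpa only [eval_mul, mul_right_comm] using hW.integrable_eval_mul
    (matPolyEquiv.symm p i a * (matPolyEquiv.symm q j b).map (starRingEnd ℂ)) a b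

@[simp] theorem polyIP_zero_left (q : (Matrix (Fin N) (Fin N) ℂ)[X]) : polyIP W 0 q = 0 := by
  ext i j
  simp [polyIP, matIP, matInt]

theorem polyIP_sub_left (hW : HasFiniteMoments W) (p q r : (Matrix (Fin N) (Fin N) ℂ)[X]) :
    polyIP W (p - q) r = polyIP W p r - polyIP W q r := by
  simp only [polyIP, matIP, map_sub, Matrix.sub_mul]
  exact matInt_sub (hW.integrable_evalScalar_mul_mul p r) (hW.integrable_evalScalar_mul_mul q r)

theorem polyIP_C_mul_left (hW : HasFiniteMoments W) (a : Matrix (Fin N) (Fin N) ℂ)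
    (p r : (Matrix (Fin N) (Fin N) ℂ)[X]) : polyIP W (C a * p) r = a * polyIP W p r := by
  rw [polyIP, matIP, polyIP, matIP, ← matInt_mul_left a (hW.integrable_evalScalar_mul_mul p r)]
  simp only [map_mul, evalScalar_C, Matrix.mul_assoc]

theorem polyIP_smul_left (c : ℂ) (p r : (Matrix (Fin N) (Fin N) ℂ)[X]) :
    polyIP W (c • p) r = c • polyIP W p r := by
  ext i j
  simp [polyIP, matIP, matInt, integral_const_mul]

theorem conjTranspose_polyIP (hWh : ∀ᵐ x, (W x).IsHermitian)
    (p q : (Matrix (Fin N) (Fin N) ℂ)[X]) : (polyIP W p q)ᴴ = polyIP W q p := by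
  rw [polyIP, matIP, conjTranspose_matInt]
  ext i j
  refine integral_congr_ae (hWh.mono fun x hx => congrFun (congrFun ?_ i) j)
  rw [conjTranspose_mul, conjTranspose_mul, conjTranspose_conjTranspose, hx.eq, Matrix.mul_assoc]

end InnerProduct

-- `𝒟 = ∂_x + A` acting on the right, and its adjoint `𝒟† = -𝒟 + 2x + t`.
noncomputable def hermiteD (A : Matrix (Fin N) (Fin N) ℂ) (q : (Matrix (Fin N) (Fin N) ℂ)[X]) :
    (Matrix (Fin N) (Fin N) ℂ)[X] :=
  derivative q + q * C A

noncomputable def hermiteDdag (A : Matrix (Fin N) (Fin N) ℂ) (t : ℝ)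
    (q : (Matrix (Fin N) (Fin N) ℂ)[X]) : (Matrix (Fin N) (Fin N) ℂ)[X] :=
  -derivative q - q * C A + (2 : ℂ) • (X * q) + (t : ℂ) • q

section HermiteOperators

variable (A : Matrix (Fin N) (Fin N) ℂ) (t : ℝ) (q : (Matrix (Fin N) (Fin N) ℂ)[X])

theorem evalScalar_hermiteD (y : ℝ) :
    evalScalar y (hermiteD A q) = matDeriv N (fun x => evalScalar x q) y + evalScalar y q * A := by
  simp [hermiteD, matDeriv_evalScalar]

theorem evalScalar_hermiteDdag (y : ℝ) :
    evalScalar y (hermiteDdag A t q) = -matDeriv N (fun x => evalScalar x q) y -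
      evalScalar y q * A + ((2 * y + t : ℝ) : ℂ) • evalScalar y q := by
  simp only [hermiteDdag, map_add, map_sub, map_neg, map_smul, map_mul, evalScalar_X,
    matDeriv_evalScalar, evalScalar_C, smul_one_mul]
  push_cast
  module

@[simp] theorem coeff_hermiteD (k : ℕ) :
    (hermiteD A q).coeff k = q.coeff (k + 1) * (k + 1) + q.coeff k * A := by
  simp [hermiteD, coeff_derivative]

@[simp] theorem coeff_hermiteDdag (k : ℕ) :
    (hermiteDdag A t q).coeff k = -(q.coeff (k + 1) * (k + 1)) - q.coeff k * A +
      (2 : ℂ) • (X * q).coeff k + (t : ℂ) • q.coeff k := by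
  simp [hermiteDdag, coeff_derivative]

end HermiteOperators

structure IsMonicOrthogonal (W : ℝ → Matrix (Fin N) (Fin N) ℂ)
    (p : ℕ → (Matrix (Fin N) (Fin N) ℂ)[X]) : Prop where
  degree_le : ∀ n, (p n).degree ≤ n
  coeff_self : ∀ n, (p n).coeff n = 1
  polyIP_eq_zero : ∀ n m, n ≠ m → polyIP W (p n) (p m) = 0

namespace IsMonicOrthogonal

variable {W : ℝ → Matrix (Fin N) (Fin N) ℂ} {p : ℕ → (Matrix (Fin N) (Fin N) ℂ)[X]}

theorem coeff_eq_zero (hp : IsMonicOrthogonal W p) {n m : ℕ} (h : n < m) : (p n).coeff m = 0 :=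
  coeff_eq_zero_of_degree_lt ((hp.degree_le n).trans_lt (by exact_mod_cast h))

theorem degree_sub_C_mul_lt (hp : IsMonicOrthogonal W p) {q : (Matrix (Fin N) (Fin N) ℂ)[X]}
    {d : ℕ} (hq : q.degree ≤ d) : (q - C (q.coeff d) * p d).degree < d := by
  refine (degree_lt_iff_coeff_zero _ _).2 fun m hm => ?_
  rcases hm.eq_or_lt with rfl | hm
  · simp [hp.coeff_self]
  · simp [hp.coeff_eq_zero hm, coeff_eq_zero_of_degree_lt (hq.trans_lt (by exact_mod_cast hm))]

theorem polyIP_eq_zero_of_degree_lt (hp : IsMonicOrthogonal W p) (hW : HasFiniteMoments W)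
    {q : (Matrix (Fin N) (Fin N) ℂ)[X]} {n : ℕ} (hq : q.degree < n) : polyIP W q (p n) = 0 := by
  suffices ∀ m ≤ n, ∀ q : (Matrix (Fin N) (Fin N) ℂ)[X], q.degree < m → polyIP W q (p n) = 0 from
    this n le_rfl q hq
  intro m
  induction m with
  | zero =>
    intro _ q hq
    simp [degree_eq_bot.mp (Nat.WithBot.lt_zero_iff.mp hq)]
  | succ m ih =>
    intro hmn q hq
    have h := ih (by omega) _ (hp.degree_sub_C_mul_lt (Order.le_of_lt_succ hq))
    rwa [polyIP_sub_left hW, polyIP_C_mul_left hW, hp.polyIP_eq_zero m n (by omega), mul_zero,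
      sub_zero] at h

theorem polyIP_eq_coeff_mul (hp : IsMonicOrthogonal W p) (hW : HasFiniteMoments W)
    {q : (Matrix (Fin N) (Fin N) ℂ)[X]} {d : ℕ} (hq : q.degree ≤ d) :
    polyIP W q (p d) = q.coeff d * polyIP W (p d) (p d) := by
  have h := hp.polyIP_eq_zero_of_degree_lt hW (hp.degree_sub_C_mul_lt hq)
  rwa [polyIP_sub_left hW, polyIP_C_mul_left hW, sub_eq_zero] at h

theorem degree_hermiteD_le (hp : IsMonicOrthogonal W p) (A : Matrix (Fin N) (Fin N) ℂ) (n : ℕ) :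
    (hermiteD A (p n)).degree ≤ n := by
  refine (degree_le_iff_coeff_zero _ _).2 fun m hm => ?_
  have hm : n < m := by exact_mod_cast hm
  simp (disch := omega) [hp.coeff_eq_zero]

theorem degree_hermiteD_sub_C_mul_le (hp : IsMonicOrthogonal W p)
    (A : Matrix (Fin N) (Fin N) ℂ) (n : ℕ) :
    (hermiteD A (p (n + 1)) - C A * p (n + 1)).degree ≤ n := by
  refine (degree_le_iff_coeff_zero _ _).2 fun m hm => ?_
  obtain ⟨j, rfl⟩ := Nat.exists_eq_add_of_lt (show n < m by exact_mod_cast hm)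
  rcases j with _ | j
  · simp (disch := omega) [hp.coeff_self, hp.coeff_eq_zero]
  · simp (disch := omega) [hp.coeff_eq_zero]

theorem degree_hermiteDdag_le (hp : IsMonicOrthogonal W p) (A : Matrix (Fin N) (Fin N) ℂ)
    (t : ℝ) (n : ℕ) : (hermiteDdag A t (p n)).degree ≤ (n + 1 : ℕ) := by
  refine (degree_le_iff_coeff_zero _ _).2 fun m hm => ?_
  obtain ⟨j, rfl⟩ := Nat.exists_eq_add_of_lt (show n + 1 < m by exact_mod_cast hm)
  simp (disch := omega) [coeff_X_mul, hp.coeff_eq_zero]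

theorem degree_hermiteDdag_sub_smul_le (hp : IsMonicOrthogonal W p)
    (A : Matrix (Fin N) (Fin N) ℂ) (t : ℝ) (n : ℕ) :
    (hermiteDdag A t (p n) - (2 : ℂ) • p (n + 1)).degree ≤ n := by
  refine (degree_le_iff_coeff_zero _ _).2 fun m hm => ?_
  obtain ⟨j, rfl⟩ := Nat.exists_eq_add_of_lt (show n < m by exact_mod_cast hm)
  rcases j with _ | j
  · simp (disch := omega) [coeff_X_mul, hp.coeff_self, hp.coeff_eq_zero]
  · simp (disch := omega) [coeff_X_mul, hp.coeff_eq_zero]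

variable {A : Matrix (Fin N) (Fin N) ℂ} {t : ℝ}

theorem two_smul_polyIP_succ (hp : IsMonicOrthogonal W p) (hW : HasFiniteMoments W)
    (hWh : ∀ᵐ x, (W x).IsHermitian)
    (hadj : ∀ q r, polyIP W (hermiteD A q) r = polyIP W q (hermiteDdag A t r)) (n : ℕ) :
    (2 : ℂ) • polyIP W (p (n + 1)) (p (n + 1)) =
      ((n : Matrix (Fin N) (Fin N) ℂ) + 1 + (p (n + 1)).coeff n * A - A * (p (n + 1)).coeff n) *
        polyIP W (p n) (p n) := by
  have hDdag : polyIP W (hermiteDdag A t (p n)) (p (n + 1)) =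
      (2 : ℂ) • polyIP W (p (n + 1)) (p (n + 1)) := by
    rw [hp.polyIP_eq_coeff_mul hW (hp.degree_hermiteDdag_le A t n)]
    simp (disch := omega) [coeff_X_mul, hp.coeff_self, hp.coeff_eq_zero]
  have h := hp.polyIP_eq_coeff_mul hW (hp.degree_hermiteD_sub_C_mul_le A n)
  rw [polyIP_sub_left hW, polyIP_C_mul_left hW, hp.polyIP_eq_zero (n + 1) n (by omega), mul_zero,
    sub_zero, hadj, ← conjTranspose_polyIP hWh, hDdag, conjTranspose_smul,
    conjTranspose_polyIP hWh] at h
  simpa (disch := omega) [hp.coeff_self, hp.coeff_eq_zero] using h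

theorem polyIP_self_mul_conjTranspose (hp : IsMonicOrthogonal W p) (hW : HasFiniteMoments W)
    (hWh : ∀ᵐ x, (W x).IsHermitian)
    (hadj : ∀ q r, polyIP W (hermiteD A q) r = polyIP W q (hermiteDdag A t r)) (n : ℕ) :
    polyIP W (p n) (p n) * Aᴴ =
      (-A + (2 : ℂ) • (X * p n).coeff n + (t : ℂ) • 1 - (2 : ℂ) • (p (n + 1)).coeff n) *
        polyIP W (p n) (p n) := by
  have hD : polyIP W (hermiteD A (p n)) (p n) = A * polyIP W (p n) (p n) := by
    rw [hp.polyIP_eq_coeff_mul hW (hp.degree_hermiteD_le A n)]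
    simp (disch := omega) [hp.coeff_self, hp.coeff_eq_zero]
  have h := hp.polyIP_eq_coeff_mul hW (hp.degree_hermiteDdag_sub_smul_le A t n)
  rw [polyIP_sub_left hW, polyIP_smul_left, hp.polyIP_eq_zero (n + 1) n (by omega), smul_zero,
    sub_zero, ← conjTranspose_polyIP hWh, ← hadj, hD, conjTranspose_mul,
    conjTranspose_polyIP hWh] at h
  simpa (disch := omega) [hp.coeff_self, hp.coeff_eq_zero] using h

end IsMonicOrthogonal

end MatrixPolynomials

section StructureRelations

variable {ι : Type*} [Fintype ι] [DecidableEq ι] {A : Matrix ι ι ℂ} {t : ℂ}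

theorem four_smul_eq_of_structure_relations {H H' X Y Z : Matrix ι ι ℂ} (hH : IsUnit H.det)
    (hα : (2 : ℂ) • H' = (Z + X * A - A * X) * H)
    (hβ : H * Aᴴ = (-A + Y + t • 1 - (2 : ℂ) • X) * H) :
    (4 : ℂ) • H' = ((2 : ℂ) • Z + Y * A - A * Y) * H - H * Aᴴ * H⁻¹ * A * H + A * H * Aᴴ := by
  have hX : (2 : ℂ) • X = -A + Y + t • 1 - H * Aᴴ * H⁻¹ := by
    rw [hβ, Matrix.mul_assoc, mul_nonsing_inv _ hH, Matrix.mul_one]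
    abel
  calc (4 : ℂ) • H' = (2 : ℂ) • ((2 : ℂ) • H') := by rw [smul_smul]; norm_num
    _ = ((2 : ℂ) • Z + ((2 : ℂ) • X) * A - A * ((2 : ℂ) • X)) * H := by
      rw [hα]
      simp only [smul_add, smul_sub, Matrix.smul_mul, Matrix.mul_smul, add_mul, sub_mul]
    _ = _ := by
      rw [hX]
      simp only [add_mul, sub_mul, mul_add, mul_sub, Matrix.smul_mul, Matrix.mul_smul, one_mul,
        mul_one, neg_mul, mul_neg, Matrix.mul_assoc, nonsing_inv_mul _ hH]
      abel

theorem eq_of_structure_relations_succ {H₀ H₁ H₂ X₁ X₂ : Matrix ι ι ℂ} (m : ℕ)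
    (hH₀ : IsUnit H₀.det) (hH₁ : IsUnit H₁.det)
    (hα₁ : (2 : ℂ) • H₁ = ((m : Matrix ι ι ℂ) + 1 + X₁ * A - A * X₁) * H₀)
    (hα₂ : (2 : ℂ) • H₂ = (((m + 1 : ℕ) : Matrix ι ι ℂ) + 1 + X₂ * A - A * X₂) * H₁)
    (hβ : H₁ * Aᴴ = (-A + (2 : ℂ) • X₁ + t • 1 - (2 : ℂ) • X₂) * H₁) :
    H₂ = (1 / 2 : ℂ) • H₁ + H₁ * H₀⁻¹ * H₁ - (1 / 4 : ℂ) • (H₁ * Aᴴ * H₁⁻¹ * A * H₁) +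
      (1 / 4 : ℂ) • (A * H₁ * Aᴴ) := by
  have h4 := four_smul_eq_of_structure_relations hH₁ hα₂ hβ
  have hC : (m : Matrix ι ι ℂ) + 1 + X₁ * A - A * X₁ = (2 : ℂ) • (H₁ * H₀⁻¹) := by
    rw [← Matrix.smul_mul, hα₁, Matrix.mul_assoc, mul_nonsing_inv _ hH₀, Matrix.mul_one]
  have hZ : (2 : ℂ) • (((m + 1 : ℕ) : Matrix ι ι ℂ) + 1) + (2 : ℂ) • X₁ * A - A * ((2 : ℂ) • X₁) =
      (2 : ℂ) • 1 + (4 : ℂ) • (H₁ * H₀⁻¹) := by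
    rw [show (4 : ℂ) • (H₁ * H₀⁻¹) = (2 : ℂ) • ((2 : ℂ) • (H₁ * H₀⁻¹)) by
      rw [smul_smul]; norm_num, ← hC, Nat.cast_succ]
    simp only [smul_mul_assoc, mul_smul_comm]
    module
  calc H₂ = (1 / 4 : ℂ) • ((4 : ℂ) • H₂) := by rw [smul_smul]; norm_num
    _ = _ := by
      rw [h4, hZ]
      simp only [add_mul, Matrix.smul_mul, Matrix.one_mul]
      module

theorem eq_of_structure_relations_zero {H₀ H₁ X₁ : Matrix ι ι ℂ} (hH₀ : IsUnit H₀.det)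
    (hα : (2 : ℂ) • H₁ = (1 + X₁ * A - A * X₁) * H₀)
    (hβ : H₀ * Aᴴ = (-A + t • 1 - (2 : ℂ) • X₁) * H₀) :
    H₁ = (1 / 2 : ℂ) • H₀ - (1 / 4 : ℂ) • (H₀ * Aᴴ * H₀⁻¹ * A * H₀) +
      (1 / 4 : ℂ) • (A * H₀ * Aᴴ) := by
  have h4 := four_smul_eq_of_structure_relations (Y := 0) hH₀ hα (by rwa [add_zero])
  calc H₁ = (1 / 4 : ℂ) • ((4 : ℂ) • H₁) := by rw [smul_smul]; norm_num
    _ = _ := by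
      rw [h4]
      simp only [zero_mul, mul_zero, add_zero, sub_zero, Matrix.smul_mul, Matrix.one_mul]
      module

end StructureRelations

theorem hermite_norm_recursion_general
    (N : ℕ) (t : ℝ)
    (A : Matrix (Fin N) (Fin N) ℂ)
    (W : ℝ → Matrix (Fin N) (Fin N) ℂ)
    (hWmeas : ∀ i j : Fin N, Measurable fun x => W x i j)
    (hWpos : ∀ᵐ x : ℝ, (W x).PosDef)
    (hWmom : ∀ (m : ℕ) (i j : Fin N),
      Integrable fun x : ℝ => |x| ^ m * ‖W x i j‖)
    (P : ℕ → ℝ → Matrix (Fin N) (Fin N) ℂ)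
    (hPmonic : ∀ n, IsMonicMatPoly N n (P n))
    (hPorth : ∀ n m, n ≠ m → matIP N W (P n) (P m) = 0)
    (hHpos : ∀ n, (matIP N W (P n) (P n)).PosDef)
    (hadj : ∀ R S : ℝ → Matrix (Fin N) (Fin N) ℂ, IsMatPoly N R → IsMatPoly N S →
      matInt N (fun y => (matDeriv N R y + R y * A) * W y * (S y)ᴴ) =
      matInt N (fun y => R y * W y *
        (-(matDeriv N S y) - S y * A + ((2 * y + t : ℝ) : ℂ) • S y)ᴴ))
    :
    (∀ n : ℕ, 1 ≤ n →
      matIP N W (P (n + 1)) (P (n + 1)) =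
        (1 / 2 : ℂ) • matIP N W (P n) (P n) +
          matIP N W (P n) (P n) * (matIP N W (P (n - 1)) (P (n - 1)))⁻¹ *
            matIP N W (P n) (P n) -
          (1 / 4 : ℂ) • (matIP N W (P n) (P n) * Aᴴ * (matIP N W (P n) (P n))⁻¹ *
            A * matIP N W (P n) (P n)) +
          (1 / 4 : ℂ) • (A * matIP N W (P n) (P n) * Aᴴ)) ∧
    matIP N W (P 1) (P 1) =
      (1 / 2 : ℂ) • matIP N W (P 0) (P 0) -
        (1 / 4 : ℂ) • (matIP N W (P 0) (P 0) * Aᴴ * (matIP N W (P 0) (P 0))⁻¹ *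
          A * matIP N W (P 0) (P 0)) +
        (1 / 4 : ℂ) • (A * matIP N W (P 0) (P 0) * Aᴴ) := by
  choose p hp_deg hp_coeff hP using fun n => (hPmonic n).exists_eq_evalScalar
  have hIP : ∀ n m, matIP N W (P n) (P m) = polyIP W (p n) (p m) := fun n m => by
    rw [hP, hP]; rfl
  have hW := hasFiniteMoments_of_integrable_abs_pow_mul_norm hWmeas hWmom
  have hWh : ∀ᵐ x, (W x).IsHermitian := hWpos.mono fun x hx => hx.isHermitian
  have hp : IsMonicOrthogonal W p := ⟨hp_deg, hp_coeff, fun n m h => hIP n m ▸ hPorth n m h⟩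
  have hD : ∀ q r, polyIP W (hermiteD A q) r = polyIP W q (hermiteDdag A t r) := fun q r => by
    simpa only [polyIP, matIP, evalScalar_hermiteD, evalScalar_hermiteDdag] using
      hadj _ _ (isMatPoly_evalScalar q) (isMatPoly_evalScalar r)
  have hH : ∀ n, IsUnit (polyIP W (p n) (p n)).det := fun n =>
    (hIP n n ▸ hHpos n).det_pos.ne'.isUnit
  have hα := hp.two_smul_polyIP_succ hW hWh hD
  have hβ := hp.polyIP_self_mul_conjTranspose hW hWh hD
  simp only [hIP]
  refine ⟨fun n hn => ?_, ?_⟩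
  · obtain ⟨m, rfl⟩ := Nat.exists_eq_add_of_le' hn
    rw [Nat.add_sub_cancel]
    exact eq_of_structure_relations_succ m (hH m) (hH (m + 1)) (hα m) (hα (m + 1))
      (by simpa only [Polynomial.coeff_X_mul] using hβ (m + 1))
  · exact eq_of_structure_relations_zero (t := t) (hH 0) (by simpa using hα 0)
      (by simpa using hβ 0)

/-- **Recursion for the squared norms in the Hermite case** (Lemma 5.1 of the paper):
if `𝒟 = ∂_x + A` has adjoint `−𝒟 + 2x + t` with respect to the matrix weight `W̃`,
then the squared norms `ℋ̃(n)` of the monic MVOPs satisfy the stated second order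
recursion with initial condition coming from `C(0) = 0`. -/
theorem hermite_norm_recursion
    (N : ℕ) (hN : 1 ≤ N) (t : ℝ)
    (A : Matrix (Fin N) (Fin N) ℂ)
    (W : ℝ → Matrix (Fin N) (Fin N) ℂ)
    (hWmeas : ∀ i j : Fin N, Measurable fun x => W x i j)
    (hWpos : ∀ᵐ x : ℝ, (W x).PosDef)
    (hWmom : ∀ (m : ℕ) (i j : Fin N),
      Integrable fun x : ℝ => |x| ^ m * ‖W x i j‖)
    (P : ℕ → ℝ → Matrix (Fin N) (Fin N) ℂ)
    (hPmonic : ∀ n, IsMonicMatPoly N n (P n))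
    (hPorth : ∀ n m, n ≠ m → matIP N W (P n) (P m) = 0)
    (hHpos : ∀ n, (matIP N W (P n) (P n)).PosDef)
    (hadj : ∀ R S : ℝ → Matrix (Fin N) (Fin N) ℂ, IsMatPoly N R → IsMatPoly N S →
      matInt N (fun y => (matDeriv N R y + R y * A) * W y * (S y)ᴴ) =
      matInt N (fun y => R y * W y *
        (-(matDeriv N S y) - S y * A + ((2 * y + t : ℝ) : ℂ) • S y)ᴴ))
    :
    (∀ n : ℕ, 1 ≤ n →
      matIP N W (P (n + 1)) (P (n + 1)) =
        (1 / 2 : ℂ) • matIP N W (P n) (P n) +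
          matIP N W (P n) (P n) * (matIP N W (P (n - 1)) (P (n - 1)))⁻¹ *
            matIP N W (P n) (P n) -
          (1 / 4 : ℂ) • (matIP N W (P n) (P n) * Aᴴ * (matIP N W (P n) (P n))⁻¹ *
            A * matIP N W (P n) (P n)) +
          (1 / 4 : ℂ) • (A * matIP N W (P n) (P n) * Aᴴ)) ∧
    matIP N W (P 1) (P 1) =
      (1 / 2 : ℂ) • matIP N W (P 0) (P 0) -
        (1 / 4 : ℂ) • (matIP N W (P 0) (P 0) * Aᴴ * (matIP N W (P 0) (P 0))⁻¹ *
          A * matIP N W (P 0) (P 0)) +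
        (1 / 4 : ℂ) • (A * matIP N W (P 0) (P 0) * Aᴴ) :=
  hermite_norm_recursion_general N t A W hWmeas hWpos hWmom P hPmonic hPorth hHpos hadj
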